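/- (Product estimate.) Let s ∈ (1/2,1] and σ ∈ (1/s,2). There exists a constant C > 0 depending only on s and σ such that for every f : ℤ² → ℂ with f(0) = 0, (∑_{k ∈ ℤ², k ≠ 0} |k|^{2(σ−1)s} |∑_{j ∈ ℤ², j ≠ 0, j ≠ k} ((j^⊥·k)/|j|) f(j) f(k−j)|²)^{1/2} ≤ C (∑_{j ≠ 0} |j|^{2σs}|f(j)|²)^{1/2} (∑_{j ≠ 0} |j|^{2(σ+1)s}|f(j)|²)^{1/2}. This is the Fourier-side form of the estimate ‖R^⊥ f · ∇f‖_{Ḣ^{(σ−1)s}(𝕋²)} ≲ ‖f‖_{Ḣ^{σs}} ‖f‖_{Ḣ^{(σ+1)s}} for mean-zero f on 𝕋², where R^⊥ = (−R₂, R₁) is the perpendicular vector of Riesz transforms. -/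

import Mathlib

/-!
Since `|j^⊥ · k| / |j| ≤ |k|`, the `k`-th coefficient is at most `|k| ∑_j |f(j)| |f(k - j)|`.
With `ρ = (σ - 1)s + 1 ≥ 1` (as `σ > 1/s ≥ 1`), the weight
`|k|^ρ ≤ 2^(ρ-1) (|j|^ρ + |k - j|^ρ)` is moved onto one factor, so the left side is at most
`2^ρ ‖(|·|^ρ |f|) ⋆ |f|‖_{ℓ²}`. Young's inequality bounds this by `‖f‖_{ℓ¹} ‖|·|^ρ f‖_{ℓ²}`;
Cauchy–Schwarz gives `‖f‖_{ℓ¹} ≤ (∑_{k≠0} |k|^(-2σs))^(1/2) ‖f‖_{Ḣ^{σs}}`, a finite constant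
because `σs > 1`, and `‖|·|^ρ f‖_{ℓ²} ≤ ‖f‖_{Ḣ^{(σ+1)s}}` because `s ≥ 1/2`.
-/

open scoped ENNReal NNReal
open MeasureTheory

noncomputable section

/-- Euclidean norm of a lattice point `k ∈ ℤ² ⊆ ℝ²`. -/
def znorm (k : ℤ × ℤ) : ℝ := Real.sqrt ((k.1 : ℝ) ^ 2 + (k.2 : ℝ) ^ 2)

/-- `j^⊥ · k` where `j^⊥ = (−j₂, j₁)`. -/
def perpDot (j k : ℤ × ℤ) : ℝ := (-(j.2 : ℝ)) * (k.1 : ℝ) + (j.1 : ℝ) * (k.2 : ℝ)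

/-- Gevrey norm `‖a‖_{ρ,φ} = (∑_{k≠0} |k|^{2ρ} e^{2φ|k|^s} |a k|²)^{1/2}`, valued in `ℝ≥0∞`. -/
def gnorm (s ρ φ : ℝ) (a : ℤ × ℤ → ℂ) : ℝ≥0∞ :=
  (∑' k : ℤ × ℤ, if k = 0 then 0 else
    ENNReal.ofReal (znorm k ^ (2 * ρ) * Real.exp (2 * φ * znorm k ^ s) * ‖a k‖ ^ 2)) ^ (1/2 : ℝ)

lemma znorm_nonneg (k : ℤ × ℤ) : 0 ≤ znorm k := Real.sqrt_nonneg _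

lemma norm_le_znorm (k : ℤ × ℤ) : ‖k‖ ≤ znorm k := by
  rw [Prod.norm_def, Int.norm_eq_abs, Int.norm_eq_abs, znorm]
  exact max_le (Real.abs_le_sqrt (by nlinarith)) (Real.abs_le_sqrt (by nlinarith))

lemma one_le_norm_of_ne_zero {k : ℤ × ℤ} (hk : k ≠ 0) : 1 ≤ ‖k‖ := by
  rw [Prod.norm_def, Int.norm_eq_abs, Int.norm_eq_abs]
  rcases ne_or_eq k.1 0 with h | h
  · exact le_max_of_le_left (by exact_mod_cast Int.one_le_abs h)
  · have h2 : k.2 ≠ 0 := fun h2 => hk (Prod.ext h h2)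
    exact le_max_of_le_right (by exact_mod_cast Int.one_le_abs h2)

lemma one_le_znorm {k : ℤ × ℤ} (hk : k ≠ 0) : 1 ≤ znorm k :=
  (one_le_norm_of_ne_zero hk).trans (norm_le_znorm k)

lemma znorm_pos {k : ℤ × ℤ} (hk : k ≠ 0) : 0 < znorm k := zero_lt_one.trans_le (one_le_znorm hk)

def latticeToComplex (k : ℤ × ℤ) : ℂ := ⟨k.1, k.2⟩

lemma znorm_eq_norm_latticeToComplex (k : ℤ × ℤ) : znorm k = ‖latticeToComplex k‖ := by
  rw [Complex.norm_def, Complex.normSq_mk, znorm, latticeToComplex]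
  ring_nf

lemma latticeToComplex_sub (j k : ℤ × ℤ) :
    latticeToComplex (k - j) = latticeToComplex k - latticeToComplex j := by
  apply Complex.ext <;> simp [latticeToComplex]

lemma perpDot_eq_im (j k : ℤ × ℤ) :
    perpDot j k = (starRingEnd ℂ (latticeToComplex j) * latticeToComplex k).im := by
  simp [perpDot, latticeToComplex]
  ring

lemma znorm_le_add (j k : ℤ × ℤ) : znorm k ≤ znorm j + znorm (k - j) := by
  simp only [znorm_eq_norm_latticeToComplex, latticeToComplex_sub]
  exact norm_le_insert' _ _

lemma abs_perpDot_le (j k : ℤ × ℤ) : |perpDot j k| ≤ znorm j * znorm k := by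
  rw [perpDot_eq_im, znorm_eq_norm_latticeToComplex, znorm_eq_norm_latticeToComplex,
    ← Complex.norm_conj (latticeToComplex j), ← norm_mul]
  exact Complex.abs_im_le_norm _

lemma abs_perpDot_div_znorm_le (j k : ℤ × ℤ) : |perpDot j k / znorm j| ≤ znorm k := by
  rw [abs_div, abs_of_nonneg (znorm_nonneg j)]
  exact div_le_of_le_mul₀ (znorm_nonneg j) (znorm_nonneg k)
    ((abs_perpDot_le j k).trans_eq (mul_comm _ _))

lemma summable_norm_rpow_neg {r : ℝ} (hr : 2 < r) : Summable fun k : ℤ × ℤ => ‖k‖ ^ (-r) := by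
  have := (EisensteinSeries.summable_one_div_norm_rpow hr).comp_injective
    (finTwoArrowEquiv ℤ).symm.injective
  refine this.congr fun k => ?_
  simp [EisensteinSeries.norm_eq_max_natAbs, Prod.norm_def, Int.norm_eq_abs]

namespace ENNReal

lemma rpow_one_half_sq (x : ℝ≥0∞) : (x ^ (1 / 2 : ℝ)) ^ 2 = x := by
  simpa using rpow_inv_natCast_pow two_ne_zero x

lemma sq_rpow_one_half (x : ℝ≥0∞) : (x ^ 2) ^ (1 / 2 : ℝ) = x := by
  simpa using pow_rpow_inv_natCast two_ne_zero x

theorem sq_tsum_mul_le {ι : Type*} (w f : ι → ℝ≥0∞) :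
    (∑' i, w i * f i) ^ 2 ≤ (∑' i, w i) * ∑' i, w i * f i ^ 2 := by
  have weighted_holder : ∑' i, w i * f i ≤
      (∑' i, w i) ^ (1 / 2 : ℝ) * (∑' i, w i * f i ^ 2) ^ (1 / 2 : ℝ) := by
    refine ENNReal.summable.tsum_le_of_sum_le fun s => ?_
    calc ∑ i ∈ s, w i * f i
        ≤ (∑ i ∈ s, w i) ^ (1 - 2⁻¹ : ℝ) * (∑ i ∈ s, w i * f i ^ (2 : ℝ)) ^ (2⁻¹ : ℝ) :=
          inner_le_weight_mul_Lp_of_nonneg s one_le_two w f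
      _ ≤ (∑' i, w i) ^ (1 / 2 : ℝ) * (∑' i, w i * f i ^ 2) ^ (1 / 2 : ℝ) := by
          norm_num only [rpow_two]
          gcongr <;> exact ENNReal.sum_le_tsum s
  calc (∑' i, w i * f i) ^ 2
      ≤ ((∑' i, w i) ^ (1 / 2 : ℝ) * (∑' i, w i * f i ^ 2) ^ (1 / 2 : ℝ)) ^ 2 := by gcongr
    _ = (∑' i, w i) * ∑' i, w i * f i ^ 2 := by rw [mul_pow, rpow_one_half_sq, rpow_one_half_sq]

lemma exists_pos_le_ofReal {x : ℝ≥0∞} (hx : x ≠ ⊤) : ∃ C : ℝ, 0 < C ∧ x ≤ ENNReal.ofReal C :=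
  ⟨x.toReal + 1, by positivity, by
    rw [ofReal_add toReal_nonneg zero_le_one, ofReal_toReal hx, ofReal_one]
    exact le_self_add⟩

end ENNReal

theorem tsum_conv_sq_le {G : Type*} [AddGroup G] (a b : G → ℝ≥0∞) :
    ∑' k, (∑' j, a j * b (k - j)) ^ 2 ≤ (∑' j, b j) ^ 2 * ∑' j, a j ^ 2 := by
  have translate (k : G) : ∑' j, b (k - j) = ∑' j, b j := (Equiv.subLeft k).tsum_eq b
  have translate' (j : G) : ∑' k, b (k - j) = ∑' k, b k := (Equiv.subRight j).tsum_eq b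
  calc ∑' k, (∑' j, a j * b (k - j)) ^ 2
      ≤ ∑' k, (∑' j, b j) * ∑' j, b (k - j) * a j ^ 2 := by
        refine ENNReal.tsum_le_tsum fun k => ?_
        simpa only [mul_comm (a _), translate] using ENNReal.sq_tsum_mul_le (fun j => b (k - j)) a
    _ = (∑' j, b j) * ∑' j, a j ^ 2 * ∑' k, b (k - j) := by
        rw [ENNReal.tsum_mul_left, ENNReal.tsum_comm]
        simp only [mul_comm (b _), ENNReal.tsum_mul_left]
    _ = (∑' j, b j) ^ 2 * ∑' j, a j ^ 2 := by
        simp only [translate', ENNReal.tsum_mul_right]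
        ring

/-- The `k = 0` term is dropped, matching the sums over `k ≠ 0` (`Real.rpow` has `0 ^ 0 = 1`). -/
def latticeWeight (ρ : ℝ) (k : ℤ × ℤ) : ℝ≥0∞ :=
  if k = 0 then 0 else ENNReal.ofReal (znorm k ^ ρ)

lemma latticeWeight_mul (a b : ℝ) (k : ℤ × ℤ) :
    latticeWeight a k * latticeWeight b k = latticeWeight (a + b) k := by
  unfold latticeWeight
  split_ifs with hk
  · simp
  · rw [← ENNReal.ofReal_mul (by positivity [znorm_nonneg k]), Real.rpow_add (znorm_pos hk)]

lemma latticeWeight_mono {a b : ℝ} (hab : a ≤ b) (k : ℤ × ℤ) :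
    latticeWeight a k ≤ latticeWeight b k := by
  unfold latticeWeight
  split_ifs with hk
  · exact le_rfl
  · exact ENNReal.ofReal_le_ofReal (Real.rpow_le_rpow_of_exponent_le (one_le_znorm hk) hab)

lemma latticeWeight_eq_ofReal_rpow {ρ : ℝ} (hρ : 0 < ρ) (k : ℤ × ℤ) :
    latticeWeight ρ k = ENNReal.ofReal (znorm k) ^ ρ := by
  unfold latticeWeight
  split_ifs with hk
  · simp [hk, znorm, hρ]
  · exact (ENNReal.ofReal_rpow_of_nonneg (znorm_nonneg k) hρ.le).symm

lemma latticeWeight_le_add {ρ : ℝ} (hρ : 1 ≤ ρ) (j k : ℤ × ℤ) :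
    latticeWeight ρ k ≤ 2 ^ (ρ - 1) * (latticeWeight ρ j + latticeWeight ρ (k - j)) := by
  simp only [latticeWeight_eq_ofReal_rpow (zero_lt_one.trans_le hρ)]
  calc ENNReal.ofReal (znorm k) ^ ρ
      ≤ (ENNReal.ofReal (znorm j) + ENNReal.ofReal (znorm (k - j))) ^ ρ := by
        rw [← ENNReal.ofReal_add (znorm_nonneg j) (znorm_nonneg _)]
        gcongr
        exact znorm_le_add j k
    _ ≤ _ := ENNReal.rpow_add_le_mul_rpow_add_rpow _ _ hρ

lemma tsum_latticeWeight_ne_top {r : ℝ} (hr : 2 < r) : ∑' k, latticeWeight (-r) k ≠ ⊤ := by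
  have hle (k : ℤ × ℤ) : latticeWeight (-r) k ≤ ENNReal.ofReal (‖k‖ ^ (-r)) := by
    unfold latticeWeight
    split_ifs with hk
    · exact zero_le
    · exact ENNReal.ofReal_le_ofReal <| Real.rpow_le_rpow_of_nonpos
        (zero_lt_one.trans_le (one_le_norm_of_ne_zero hk)) (norm_le_znorm k) (by linarith)
  refine ne_top_of_le_ne_top ?_ (ENNReal.tsum_le_tsum hle)
  rw [← ENNReal.ofReal_tsum_of_nonneg (fun _ => by positivity) (summable_norm_rpow_neg hr)]
  exact ENNReal.ofReal_ne_top

lemma ofReal_rpow_two_mul_mul_norm_sq {E : Type*} [SeminormedAddGroup E] {x : ℝ} (hx : 0 ≤ x)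
    (β : ℝ) (z : E) :
    ENNReal.ofReal (x ^ (2 * β) * ‖z‖ ^ 2) = (ENNReal.ofReal (x ^ β) * ‖z‖ₑ) ^ 2 := by
  rw [mul_comm 2 β, ← Nat.cast_ofNat, Real.rpow_mul_natCast hx, ← mul_pow,
    ENNReal.ofReal_pow (by positivity), ENNReal.ofReal_mul (by positivity), ofReal_norm]

lemma gnorm_zero_sq (s ρ : ℝ) (f : ℤ × ℤ → ℂ) :
    gnorm s ρ 0 f ^ 2 = ∑' k, (latticeWeight ρ k * ‖f k‖ₑ) ^ 2 := by
  rw [gnorm, ← ENNReal.rpow_natCast, ← ENNReal.rpow_mul]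
  norm_num only [ENNReal.rpow_one, mul_zero, zero_mul, Real.exp_zero, mul_one]
  refine tsum_congr fun k => ?_
  unfold latticeWeight
  split_ifs
  · simp
  · exact ofReal_rpow_two_mul_mul_norm_sq (znorm_nonneg k) ρ (f k)

lemma enorm_rieszSum_le (f : ℤ × ℤ → ℂ) (k : ℤ × ℤ) :
    ‖∑' j : ℤ × ℤ, if j = 0 ∨ j = k then 0 else
        ((perpDot j k / znorm j : ℝ) : ℂ) * f j * f (k - j)‖ₑ ≤
      ENNReal.ofReal (znorm k) * ∑' j, ‖f j‖ₑ * ‖f (k - j)‖ₑ := by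
  refine enorm_tsum_le_tsum_enorm.trans ?_
  rw [← ENNReal.tsum_mul_left]
  refine ENNReal.tsum_le_tsum fun j => ?_
  split_ifs
  · simp
  · rw [enorm_mul, enorm_mul, ← mul_assoc, ← ofReal_norm ((perpDot j k / znorm j : ℝ) : ℂ),
      Complex.norm_real, Real.norm_eq_abs]
    gcongr
    exact abs_perpDot_div_znorm_le j k

lemma latticeWeight_mul_tsum_le {ρ : ℝ} (hρ : 1 ≤ ρ) (u : ℤ × ℤ → ℝ≥0∞) (k : ℤ × ℤ) :
    latticeWeight ρ k * ∑' j, u j * u (k - j) ≤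
      2 ^ ρ * ∑' j, latticeWeight ρ j * u j * u (k - j) := by
  have swap : ∑' j, latticeWeight ρ (k - j) * (u j * u (k - j)) =
      ∑' j, latticeWeight ρ j * (u j * u (k - j)) := by
    rw [← (Equiv.subLeft k).tsum_eq]
    simp only [Equiv.subLeft_apply, sub_sub_cancel]
    exact tsum_congr fun j => by ring
  calc latticeWeight ρ k * ∑' j, u j * u (k - j)
      ≤ ∑' j, 2 ^ (ρ - 1) * (latticeWeight ρ j + latticeWeight ρ (k - j)) *
          (u j * u (k - j)) := by
        rw [← ENNReal.tsum_mul_left]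
        gcongr with j
        exact latticeWeight_le_add hρ j k
    _ = 2 ^ (ρ - 1) * 2 * ∑' j, latticeWeight ρ j * u j * u (k - j) := by
        simp only [mul_assoc, ENNReal.tsum_mul_left, add_mul, ENNReal.tsum_add, swap]
        ring
    _ = 2 ^ ρ * ∑' j, latticeWeight ρ j * u j * u (k - j) := by
        have two_rpow : (2 : ℝ≥0∞) ^ (ρ - 1) * 2 ^ (1 : ℝ) = 2 ^ ρ := by
          rw [← ENNReal.rpow_add _ _ two_ne_zero ENNReal.ofNat_ne_top, sub_add_cancel]
        rw [← two_rpow, ENNReal.rpow_one]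

lemma rieszTerm_le {β : ℝ} (hβ : 0 ≤ β) (f : ℤ × ℤ → ℂ) (k : ℤ × ℤ) :
    (if k = 0 then 0 else ENNReal.ofReal (znorm k ^ (2 * β) *
        ‖∑' j : ℤ × ℤ, if j = 0 ∨ j = k then 0 else
          ((perpDot j k / znorm j : ℝ) : ℂ) * f j * f (k - j)‖ ^ 2)) ≤
      (2 ^ (β + 1) * ∑' j, latticeWeight (β + 1) j * ‖f j‖ₑ * ‖f (k - j)‖ₑ) ^ 2 := by
  split_ifs with hk
  · exact zero_le
  rw [ofReal_rpow_two_mul_mul_norm_sq (znorm_nonneg k)]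
  gcongr ?_ ^ 2
  calc ENNReal.ofReal (znorm k ^ β) * ‖_‖ₑ
      ≤ ENNReal.ofReal (znorm k ^ β) *
          (ENNReal.ofReal (znorm k) * ∑' j, ‖f j‖ₑ * ‖f (k - j)‖ₑ) := by
        gcongr
        exact enorm_rieszSum_le f k
    _ = latticeWeight (β + 1) k * ∑' j, ‖f j‖ₑ * ‖f (k - j)‖ₑ := by
        rw [← mul_assoc, ← ENNReal.ofReal_mul (by positivity [znorm_nonneg k]), latticeWeight,
          if_neg hk, Real.rpow_add_one (znorm_pos hk).ne']
    _ ≤ _ := latticeWeight_mul_tsum_le (by linarith) _ k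

lemma sq_tsum_le_latticeWeight_mul (t : ℝ) (u : ℤ × ℤ → ℝ≥0∞) (hu : u 0 = 0) :
    (∑' k, u k) ^ 2 ≤
      (∑' k, latticeWeight (-(2 * t)) k) * ∑' k, (latticeWeight t k * u k) ^ 2 := by
  have factor (k : ℤ × ℤ) :
      u k = latticeWeight (-(2 * t)) k * (latticeWeight (2 * t) k * u k) := by
    rw [← mul_assoc, latticeWeight_mul, neg_add_cancel, latticeWeight]
    split_ifs with hk
    · simp [hk, hu]
    · simp
  have weighted_sq (k : ℤ × ℤ) :
      latticeWeight (-(2 * t)) k * (latticeWeight (2 * t) k * u k) ^ 2 =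
        (latticeWeight t k * u k) ^ 2 := by
    calc _ = latticeWeight (-(2 * t)) k * latticeWeight (2 * t) k * latticeWeight (2 * t) k *
          u k ^ 2 := by ring
      _ = (latticeWeight t k * u k) ^ 2 := by
          rw [latticeWeight_mul, latticeWeight_mul, neg_add_cancel, zero_add, two_mul,
            ← latticeWeight_mul]
          ring
  calc (∑' k, u k) ^ 2
      = (∑' k, latticeWeight (-(2 * t)) k * (latticeWeight (2 * t) k * u k)) ^ 2 := by
        rw [tsum_congr factor]
    _ ≤ _ := ENNReal.sq_tsum_mul_le _ _
    _ = _ := by simp only [weighted_sq]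

theorem tsum_rieszTerm_le {β γ : ℝ} (hβ : 0 ≤ β) (hγ : β + 1 ≤ γ) (s t : ℝ) (f : ℤ × ℤ → ℂ)
    (hf : f 0 = 0) :
    ∑' k : ℤ × ℤ, (if k = 0 then 0 else ENNReal.ofReal (znorm k ^ (2 * β) *
        ‖∑' j : ℤ × ℤ, if j = 0 ∨ j = k then 0 else
          ((perpDot j k / znorm j : ℝ) : ℂ) * f j * f (k - j)‖ ^ 2)) ≤
      (2 ^ (β + 1)) ^ 2 * (∑' k, latticeWeight (-(2 * t)) k) *
        gnorm s t 0 f ^ 2 * gnorm s γ 0 f ^ 2 := by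
  calc _ ≤ ∑' k, (2 ^ (β + 1) * ∑' j, latticeWeight (β + 1) j * ‖f j‖ₑ * ‖f (k - j)‖ₑ) ^ 2 :=
        ENNReal.tsum_le_tsum (rieszTerm_le hβ f)
    _ = (2 ^ (β + 1)) ^ 2 *
          ∑' k, (∑' j, latticeWeight (β + 1) j * ‖f j‖ₑ * ‖f (k - j)‖ₑ) ^ 2 := by
        simp only [mul_pow, ENNReal.tsum_mul_left]
    _ ≤ (2 ^ (β + 1)) ^ 2 *
          ((∑' j, ‖f j‖ₑ) ^ 2 * ∑' j, (latticeWeight (β + 1) j * ‖f j‖ₑ) ^ 2) := by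
        gcongr
        exact tsum_conv_sq_le _ _
    _ ≤ (2 ^ (β + 1)) ^ 2 *
          ((∑' k, latticeWeight (-(2 * t)) k) * gnorm s t 0 f ^ 2 * gnorm s γ 0 f ^ 2) := by
        rw [gnorm_zero_sq, gnorm_zero_sq]
        gcongr with j
        · exact sq_tsum_le_latticeWeight_mul t _ (by simp [hf])
        · exact latticeWeight_mono hγ j
    _ = _ := by ring

/-- **Product estimate** `‖R^⊥f·∇f‖_{Ḣ^{(σ−1)s}} ≲ ‖f‖_{Ḣ^{σs}} ‖f‖_{Ḣ^{(σ+1)s}}` on the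
Fourier side: for `s ∈ (1/2,1]`, `σ ∈ (1/s,2)` there is `C > 0` (depending only on `s, σ`)
such that for every `f : ℤ² → ℂ` with `f(0) = 0`,
`(∑_{k≠0} |k|^{2(σ−1)s} |∑_{j≠0,j≠k} ((j^⊥·k)/|j|) f(j) f(k−j)|²)^{1/2}
  ≤ C (∑_{j≠0} |j|^{2σs}|f(j)|²)^{1/2} (∑_{j≠0} |j|^{2(σ+1)s}|f(j)|²)^{1/2}`. -/
theorem riesz_product_estimate
    (s σ : ℝ) (hs : s ∈ Set.Ioc (1/2 : ℝ) 1) (hσ : σ ∈ Set.Ioo (1/s) 2) :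
    ∃ C : ℝ, 0 < C ∧
      ∀ f : ℤ × ℤ → ℂ, f 0 = 0 →
        (∑' k : ℤ × ℤ, if k = 0 then 0 else
            ENNReal.ofReal (znorm k ^ (2 * (σ - 1) * s) *
              ‖∑' j : ℤ × ℤ, if j = 0 ∨ j = k then 0 else
                ((perpDot j k / znorm j : ℝ) : ℂ) * f j * f (k - j)‖ ^ 2)) ^ (1/2 : ℝ) ≤
          ENNReal.ofReal C * gnorm s (σ * s) 0 f * gnorm s ((σ + 1) * s) 0 f := by
  obtain ⟨hs_half, hs_le_one⟩ := hs
  have hs_pos : 0 < s := by linarith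
  have hσs : 1 < σ * s := (div_lt_iff₀ hs_pos).mp hσ.1
  have hβ : 0 ≤ (σ - 1) * s := by nlinarith
  have hγ : (σ - 1) * s + 1 ≤ (σ + 1) * s := by nlinarith
  set K := ∑' k, latticeWeight (-(2 * (σ * s))) k
  have hK : K ≠ ⊤ := tsum_latticeWeight_ne_top (by linarith)
  obtain ⟨C, hC_pos, hC⟩ :=
    ENNReal.exists_pos_le_ofReal (x := 2 ^ ((σ - 1) * s + 1) * K ^ (1 / 2 : ℝ)) (by finiteness)
  refine ⟨C, hC_pos, fun f hf => ?_⟩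
  rw [mul_assoc 2 (σ - 1) s]
  calc _ ≤ ((2 ^ ((σ - 1) * s + 1) * K ^ (1 / 2 : ℝ) *
          gnorm s (σ * s) 0 f * gnorm s ((σ + 1) * s) 0 f) ^ 2) ^ (1 / 2 : ℝ) := by
        gcongr
        refine (tsum_rieszTerm_le hβ hγ s (σ * s) f hf).trans_eq ?_
        rw [mul_pow, mul_pow, mul_pow, ENNReal.rpow_one_half_sq]
    _ ≤ _ := by
        rw [ENNReal.sq_rpow_one_half]
        gcongr
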